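/- (BSC-bound for H_α^H.) Fix α > 0, α ≠ 1, and suppose that for every fixed y ∈ I_α^H the map x ↦ κ_α^H(x,y) is convex on I_α^H, and likewise in the second argument for every fixed first argument. Then: if α > 1, H_α^H(X_1+X_2|Y_1Y_2) ≤ h_α( h_α^{-1}(H_α^H(X_1|Y_1)) ∗ h_α^{-1}(H_α^H(X_2|Y_2)) ); and if α < 1, H_α^H(X_1+X_2|Y_1Y_2) ≥ h_α( h_α^{-1}(H_α^H(X_1|Y_1)) ∗ h_α^{-1}(H_α^H(X_2|Y_2)) ). If instead κ_α^H is concave in each argument, the two inequalities hold with ≤ and ≥ exchanged. -/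

import Mathlib

open Real

noncomputable section

/-- Binary convolution `a∗b = a(1-b) + (1-a)b`. -/
def bconv (a b : ℝ) : ℝ := a * (1 - b) + (1 - a) * b

/-- Binary Rényi entropy `h_α(p) = (1/(1-α))·log(p^α + (1-p)^α)`. -/
def binH (α p : ℝ) : ℝ := (1 / (1 - α)) * Real.log (p ^ α + (1 - p) ^ α)

/-- Inverse of `h_α` as a map `[0, log 2] → [0, 1/2]`. -/
def binHInv (α : ℝ) : ℝ → ℝ := Function.invFunOn (binH α) (Set.Icc 0 (1/2))

/-- `k_α^A(p) = (p^α + (1-p)^α)^{1/α}`. -/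
def kA (α p : ℝ) : ℝ := (p ^ α + (1 - p) ^ α) ^ (1/α)

/-- Inverse of `k_α^A`, mapping `I_α^A` back to `[0,1/2]`. -/
def kAInv (α : ℝ) : ℝ → ℝ := Function.invFunOn (kA α) (Set.Icc 0 (1/2))

/-- `δ_α^A = 2^{(1-α)/α}`. -/
def deltaA (α : ℝ) : ℝ := (2 : ℝ) ^ ((1 - α)/α)

/-- The closed interval `I_α^A` with endpoints `1` and `δ_α^A`. -/
def IA (α : ℝ) : Set ℝ := Set.uIcc 1 (deltaA α)

/-- `κ_α^A(x,y) = k_α^A((k_α^A)⁻¹(x) ∗ (k_α^A)⁻¹(y))`. -/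
def kkA (α x y : ℝ) : ℝ := kA α (bconv (kAInv α x) (kAInv α y))

/-- `k_α^H(p) = p^α + (1-p)^α`. -/
def kH (α p : ℝ) : ℝ := p ^ α + (1 - p) ^ α

/-- Inverse of `k_α^H`, mapping `I_α^H` back to `[0,1/2]`. -/
def kHInv (α : ℝ) : ℝ → ℝ := Function.invFunOn (kH α) (Set.Icc 0 (1/2))

/-- `δ_α^H = 2^{1-α}`. -/
def deltaH (α : ℝ) : ℝ := (2 : ℝ) ^ (1 - α)

/-- The closed interval `I_α^H` with endpoints `1` and `δ_α^H`. -/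
def IH (α : ℝ) : Set ℝ := Set.uIcc 1 (deltaH α)

/-- `κ_α^H(x,y) = k_α^H((k_α^H)⁻¹(x) ∗ (k_α^H)⁻¹(y))`. -/
def kkH (α x y : ℝ) : ℝ := kH α (bconv (kHInv α x) (kHInv α y))

/-- `ĥ_α(x,y) = h_α(h_α⁻¹(x) ∗ h_α⁻¹(y))`. -/
def hhat (α x y : ℝ) : ℝ := binH α (bconv (binHInv α x) (binHInv α y))

/-- Marginal on `Y` of a joint pmf. -/
def margY {X Y : Type*} [Fintype X] (p : X → Y → ℝ) (y : Y) : ℝ := ∑ x, p x y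

/-- A joint pmf: nonnegative entries summing to one. -/
def IsPmf {X Y : Type*} [Fintype X] [Fintype Y] (p : X → Y → ℝ) : Prop :=
  (∀ x y, 0 ≤ p x y) ∧ ∑ x, ∑ y, p x y = 1

/-- Arimoto conditional Rényi entropy `H_α^A(X|Y)`. -/
def condA (α : ℝ) {X Y : Type*} [Fintype X] [Fintype Y] (p : X → Y → ℝ) : ℝ :=
  (α / (1 - α)) * Real.log (∑ y, margY p y * (∑ x, (p x y / margY p y) ^ α) ^ (1/α))

/-- Hayashi conditional Rényi entropy `H_α^H(X|Y)`. -/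
def condH (α : ℝ) {X Y : Type*} [Fintype X] [Fintype Y] (p : X → Y → ℝ) : ℝ :=
  (1 / (1 - α)) * Real.log (∑ y, ∑ x, margY p y * (p x y / margY p y) ^ α)

/-- Jizba–Arimitsu conditional Rényi entropy `H_α^J(X|Y)`. -/
def condJ (α : ℝ) {X Y : Type*} [Fintype X] [Fintype Y] (p : X → Y → ℝ) : ℝ :=
  (1 / (1 - α)) * (Real.log (∑ x, ∑ y, p x y ^ α) - Real.log (∑ y, margY p y ^ α))

/-- Cachin conditional Rényi entropy `H_α^C(X|Y)`. -/
def condC (α : ℝ) {X Y : Type*} [Fintype X] [Fintype Y] (p : X → Y → ℝ) : ℝ :=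
  (1 / (1 - α)) * ∑ y, margY p y * Real.log (∑ x, (p x y / margY p y) ^ α)

/-- `K_α^A(X|Y) = exp(((1-α)/α)·H_α^A(X|Y))`. -/
def KA (α : ℝ) {X Y : Type*} [Fintype X] [Fintype Y] (p : X → Y → ℝ) : ℝ :=
  Real.exp (((1 - α)/α) * condA α p)

/-- `K_α^H(X|Y) = exp((1-α)·H_α^H(X|Y))`. -/
def KH (α : ℝ) {X Y : Type*} [Fintype X] [Fintype Y] (p : X → Y → ℝ) : ℝ :=
  Real.exp ((1 - α) * condH α p)

/-- `K_α^J(X|Y) = exp((1-α)·H_α^J(X|Y))`. -/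
def KJ (α : ℝ) {X Y : Type*} [Fintype X] [Fintype Y] (p : X → Y → ℝ) : ℝ :=
  Real.exp ((1 - α) * condJ α p)

/-- Joint pmf of `(X₁+X₂, (Y₁,Y₂))` for independent pairs `(X₁,Y₁)`, `(X₂,Y₂)`. -/
def combine {Y1 Y2 : Type*} (p1 : Bool → Y1 → ℝ) (p2 : Bool → Y2 → ℝ) :
    Bool → Y1 × Y2 → ℝ :=
  fun z y => ∑ x : Bool, p1 x y.1 * p2 (Bool.xor x z) y.2

/-- `k_∞^A(p) = max{p, 1-p}`. -/
def kInf (p : ℝ) : ℝ := max p (1 - p)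

/-- Binary min-entropy `h_∞(p) = -log max{p, 1-p}`. -/
def binHInf (p : ℝ) : ℝ := - Real.log (max p (1 - p))

/-- Inverse of the restriction of `h_∞` to `[0,1/2]`. -/
def binHInfInv : ℝ → ℝ := Function.invFunOn binHInf (Set.Icc 0 (1/2))

/-- Conditional min-entropy `H_∞(X|Y)` for binary `X`. -/
def condInf {Y : Type*} [Fintype Y] (p : Bool → Y → ℝ) : ℝ :=
  - Real.log (∑ y, margY p y * max (p false y / margY p y) (p true y / margY p y))

/-- Unconditional Rényi entropy of a finitely supported distribution. -/
def renyiEnt (α : ℝ) {X : Type*} [Fintype X] (p : X → ℝ) : ℝ :=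
  (1 / (1 - α)) * Real.log (∑ x, p x ^ α)

/-- Distribution of the mod-2 sum of two independent binary random variables. -/
def sumDist (p1 p2 : Bool → ℝ) : Bool → ℝ := fun z => ∑ x : Bool, p1 x * p2 (Bool.xor x z)

/-!
With `k = k_α^H` and `K = ∑_y P(y) k(P(X = 1 | y))` one has `H_α^H(X|Y) = log K / (1 - α)` and
`h_α⁻¹(H_α^H(X|Y)) = k⁻¹(K)`, so the right-hand side is `log κ(K₁, K₂) / (1 - α)`.
Given `(y₁, y₂)`, `X₁ + X₂` is Bernoulli with parameter `a ∗ b`, where `a`, `b` are the conditional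
parameters of `X₁`, `X₂`; since `k` is symmetric about `1/2`, `κ(k a, k b) = k(a ∗ b)`, so `K` of the
combined pair is the average of `κ(k a, k b)` over the independent `y₁`, `y₂`. Jensen's inequality
in each argument compares it with `κ(K₁, K₂)`, and `t ↦ log t / (1 - α)` is increasing for `α < 1`
and decreasing for `α > 1`.
-/

lemma bconv_one_sub_left (a b : ℝ) : bconv (1 - a) b = 1 - bconv a b := by
  unfold bconv; ring

lemma bconv_one_sub_right (a b : ℝ) : bconv a (1 - b) = 1 - bconv a b := by
  unfold bconv; ring

lemma bconv_mem_Icc {a b : ℝ} (ha : a ∈ Set.Icc (0:ℝ) 1) (hb : b ∈ Set.Icc (0:ℝ) 1) :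
    bconv a b ∈ Set.Icc (0:ℝ) 1 := by
  obtain ⟨ha0, ha1⟩ := ha
  obtain ⟨hb0, hb1⟩ := hb
  unfold bconv
  constructor <;> nlinarith [mul_nonneg ha0 hb0, mul_nonneg (sub_nonneg.2 ha1) (sub_nonneg.2 hb1)]

section kH

variable {α p q x y : ℝ}

lemma kH_one_sub (α p : ℝ) : kH α (1 - p) = kH α p := by
  simp [kH, add_comm]

lemma continuous_kH (hα : 0 < α) : Continuous (kH α) :=
  have h : Continuous fun p : ℝ => p ^ α := continuous_id.rpow_const fun _ => Or.inr hα.le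
  h.add (h.comp (continuous_const.sub continuous_id))

lemma kH_zero (hα : 0 < α) : kH α 0 = 1 := by
  simp [kH, Real.zero_rpow hα.ne']

lemma kH_half (α : ℝ) : kH α (1 / 2) = deltaH α := by
  rw [kH, deltaH, show (1:ℝ) - 1 / 2 = 2⁻¹ by norm_num, one_div, ← two_mul,
    Real.inv_rpow zero_le_two, Real.rpow_sub two_pos, Real.rpow_one, div_eq_mul_inv]

lemma hasDerivAt_kH (hp : p ∈ Set.Ioo (0:ℝ) 1) :
    HasDerivAt (kH α) (α * (p ^ (α - 1) - (1 - p) ^ (α - 1))) p := by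
  have h₁ := (hasDerivAt_id p).rpow_const (p := α) (Or.inl hp.1.ne')
  have h₂ := ((hasDerivAt_id p).const_sub 1).rpow_const (p := α)
    (Or.inl (sub_pos.2 hp.2).ne')
  exact (h₁.add h₂).congr_deriv (by simp only [id]; ring)

lemma kH_strictMonoOn (hα₀ : 0 < α) (hα₁ : α < 1) :
    StrictMonoOn (kH α) (Set.Icc 0 (1 / 2)) := by
  refine strictMonoOn_of_deriv_pos (convex_Icc _ _) (continuous_kH hα₀).continuousOn ?_
  rw [interior_Icc]
  intro p hp
  rw [(hasDerivAt_kH ⟨hp.1, by linarith [hp.2]⟩).deriv]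
  have : (1 - p) ^ (α - 1) < p ^ (α - 1) :=
    Real.rpow_lt_rpow_of_neg hp.1 (by linarith [hp.2]) (by linarith)
  exact mul_pos hα₀ (sub_pos.2 this)

lemma kH_strictAntiOn (hα : 1 < α) : StrictAntiOn (kH α) (Set.Icc 0 (1 / 2)) := by
  refine strictAntiOn_of_deriv_neg (convex_Icc _ _)
    (continuous_kH (by linarith)).continuousOn ?_
  rw [interior_Icc]
  intro p hp
  rw [(hasDerivAt_kH ⟨hp.1, by linarith [hp.2]⟩).deriv]
  have : p ^ (α - 1) < (1 - p) ^ (α - 1) :=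
    Real.rpow_lt_rpow hp.1.le (by linarith [hp.2]) (by linarith)
  exact mul_neg_of_pos_of_neg (by linarith) (sub_neg.2 this)

lemma kH_injOn (hα₀ : 0 < α) (hα₁ : α ≠ 1) : Set.InjOn (kH α) (Set.Icc 0 (1 / 2)) := by
  rcases hα₁.lt_or_gt with h | h
  · exact (kH_strictMonoOn hα₀ h).injOn
  · exact (kH_strictAntiOn h).injOn

lemma kH_image_Icc (hα₀ : 0 < α) (hα₁ : α ≠ 1) :
    kH α '' Set.Icc 0 (1 / 2) = IH α := by
  have hI : Set.Icc (0:ℝ) (1 / 2) = Set.uIcc 0 (1 / 2) := (Set.uIcc_of_le (by norm_num)).symm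
  have hc := (continuous_kH hα₀).continuousOn (s := Set.uIcc 0 (1 / 2))
  have himage : kH α '' Set.uIcc 0 (1 / 2) = Set.uIcc (kH α 0) (kH α (1 / 2)) := by
    rcases hα₁.lt_or_gt with h | h
    · exact hc.image_uIcc_of_monotoneOn (hI ▸ (kH_strictMonoOn hα₀ h).monotoneOn)
    · exact hc.image_uIcc_of_antitoneOn (hI ▸ (kH_strictAntiOn h).antitoneOn)
  rwa [kH_zero hα₀, kH_half, ← hI] at himage

lemma kH_mem_IH (hα₀ : 0 < α) (hα₁ : α ≠ 1) (hp : p ∈ Set.Icc (0:ℝ) 1) : kH α p ∈ IH α := by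
  rw [← kH_image_Icc hα₀ hα₁]
  rcases le_total p (1 / 2) with h | h
  · exact ⟨p, ⟨hp.1, h⟩, rfl⟩
  · exact ⟨1 - p, ⟨by linarith [hp.2], by linarith⟩, kH_one_sub α p⟩

lemma pos_of_mem_IH (hx : x ∈ IH α) : 0 < x :=
  lt_of_lt_of_le (lt_min one_pos (Real.rpow_pos_of_pos two_pos _)) hx.1

lemma kHInv_mem_Icc (hα₀ : 0 < α) (hα₁ : α ≠ 1) (hx : x ∈ IH α) :
    kHInv α x ∈ Set.Icc (0:ℝ) (1 / 2) :=
  Function.invFunOn_mem ((kH_image_Icc hα₀ hα₁).symm ▸ hx :)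

lemma kH_kHInv (hα₀ : 0 < α) (hα₁ : α ≠ 1) (hx : x ∈ IH α) : kH α (kHInv α x) = x :=
  Function.invFunOn_eq ((kH_image_Icc hα₀ hα₁).symm ▸ hx :)

lemma kHInv_kH (hα₀ : 0 < α) (hα₁ : α ≠ 1) (hp : p ∈ Set.Icc (0:ℝ) (1 / 2)) :
    kHInv α (kH α p) = p :=
  (kH_injOn hα₀ hα₁).leftInvOn_invFunOn hp

lemma kHInv_kH_eq_or (hα₀ : 0 < α) (hα₁ : α ≠ 1) (hp : p ∈ Set.Icc (0:ℝ) 1) :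
    kHInv α (kH α p) = p ∨ kHInv α (kH α p) = 1 - p := by
  rcases le_total p (1 / 2) with h | h
  · exact Or.inl (kHInv_kH hα₀ hα₁ ⟨hp.1, h⟩)
  · exact Or.inr (kH_one_sub α p ▸ kHInv_kH hα₀ hα₁ ⟨by linarith [hp.2], by linarith⟩)

/-- `kHInv (kH p)` is `p` or `1 - p`, and `kH (p ∗ q)` does not see which. -/
lemma kkH_kH_kH (hα₀ : 0 < α) (hα₁ : α ≠ 1) (hp : p ∈ Set.Icc (0:ℝ) 1)
    (hq : q ∈ Set.Icc (0:ℝ) 1) : kkH α (kH α p) (kH α q) = kH α (bconv p q) := by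
  unfold kkH
  rcases kHInv_kH_eq_or hα₀ hα₁ hp with h₁ | h₁ <;>
    rcases kHInv_kH_eq_or hα₀ hα₁ hq with h₂ | h₂ <;>
    simp only [h₁, h₂, bconv_one_sub_left, bconv_one_sub_right, sub_sub_cancel, kH_one_sub]

lemma kkH_mem_IH (hα₀ : 0 < α) (hα₁ : α ≠ 1) (hx : x ∈ IH α) (hy : y ∈ IH α) :
    kkH α x y ∈ IH α := by
  have h₁ := kHInv_mem_Icc hα₀ hα₁ hx
  have h₂ := kHInv_mem_Icc hα₀ hα₁ hy
  exact kH_mem_IH hα₀ hα₁ (bconv_mem_Icc ⟨h₁.1, by linarith [h₁.2]⟩ ⟨h₂.1, by linarith [h₂.2]⟩)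

lemma binH_injOn (hα₀ : 0 < α) (hα₁ : α ≠ 1) : Set.InjOn (binH α) (Set.Icc 0 (1 / 2)) := by
  intro p hp q hq h
  have hc : (1:ℝ) / (1 - α) ≠ 0 := one_div_ne_zero (sub_ne_zero.2 hα₁.symm)
  have hk : ∀ r ∈ Set.Icc (0:ℝ) (1 / 2), 0 < kH α r := fun r hr =>
    pos_of_mem_IH (kH_mem_IH hα₀ hα₁ ⟨hr.1, by linarith [hr.2]⟩)
  refine kH_injOn hα₀ hα₁ hp hq (Real.log_injOn_pos (hk p hp) (hk q hq) ?_)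
  exact mul_left_cancel₀ hc h

end kH

section SeparatelyConvex

variable {ι κ E F : Type*} [AddCommGroup E] [Module ℝ E] [AddCommGroup F] [Module ℝ F]
  {s : Set E} {t : Set F} {f : E → F → ℝ} {I : Finset ι} {J : Finset κ}
  {v : ι → ℝ} {w : κ → ℝ} {x : ι → E} {y : κ → F}

theorem map_sum_sum_le_of_convexOn (hf₁ : ∀ b ∈ t, ConvexOn ℝ s (f · b))
    (hf₂ : ∀ a ∈ s, ConvexOn ℝ t (f a ·)) (hv₀ : ∀ i ∈ I, 0 ≤ v i) (hv₁ : ∑ i ∈ I, v i = 1)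
    (hw₀ : ∀ j ∈ J, 0 ≤ w j) (hw₁ : ∑ j ∈ J, w j = 1) (hx : ∀ i ∈ I, x i ∈ s)
    (hy : ∀ j ∈ J, y j ∈ t) :
    f (∑ i ∈ I, v i • x i) (∑ j ∈ J, w j • y j) ≤
      ∑ i ∈ I, ∑ j ∈ J, v i * w j * f (x i) (y j) := by
  obtain ⟨i₀, hi₀⟩ := Finset.nonempty_of_sum_ne_zero (hv₁ ▸ one_ne_zero)
  have hyt : ∑ j ∈ J, w j • y j ∈ t := (hf₂ _ (hx i₀ hi₀)).1.sum_mem hw₀ hw₁ hy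
  calc f (∑ i ∈ I, v i • x i) (∑ j ∈ J, w j • y j)
      ≤ ∑ i ∈ I, v i • f (x i) (∑ j ∈ J, w j • y j) := (hf₁ _ hyt).map_sum_le hv₀ hv₁ hx
    _ ≤ ∑ i ∈ I, v i * ∑ j ∈ J, w j • f (x i) (y j) :=
        Finset.sum_le_sum fun i hi => mul_le_mul_of_nonneg_left
          ((hf₂ _ (hx i hi)).map_sum_le hw₀ hw₁ hy) (hv₀ i hi)
    _ = ∑ i ∈ I, ∑ j ∈ J, v i * w j * f (x i) (y j) := by
        simp only [Finset.mul_sum, smul_eq_mul, mul_assoc]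

theorem sum_sum_le_map_of_concaveOn (hf₁ : ∀ b ∈ t, ConcaveOn ℝ s (f · b))
    (hf₂ : ∀ a ∈ s, ConcaveOn ℝ t (f a ·)) (hv₀ : ∀ i ∈ I, 0 ≤ v i) (hv₁ : ∑ i ∈ I, v i = 1)
    (hw₀ : ∀ j ∈ J, 0 ≤ w j) (hw₁ : ∑ j ∈ J, w j = 1) (hx : ∀ i ∈ I, x i ∈ s)
    (hy : ∀ j ∈ J, y j ∈ t) :
    ∑ i ∈ I, ∑ j ∈ J, v i * w j * f (x i) (y j) ≤
      f (∑ i ∈ I, v i • x i) (∑ j ∈ J, w j • y j) := by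
  have h := map_sum_sum_le_of_convexOn (f := fun a b => -f a b) (fun b hb => (hf₁ b hb).neg)
    (fun a ha => (hf₂ a ha).neg) hv₀ hv₁ hw₀ hw₁ hx hy
  simpa only [mul_neg, Finset.sum_neg_distrib, neg_le_neg_iff] using h

end SeparatelyConvex

section ConditionalProbability

variable {Y Y1 Y2 : Type*} {p : Bool → Y → ℝ} {p1 : Bool → Y1 → ℝ} {p2 : Bool → Y2 → ℝ}

/-- `P(X = 1 | Y = y)`, which is `0` when `P(Y = y) = 0`. -/
def condProbTrue (p : Bool → Y → ℝ) (y : Y) : ℝ := p true y / margY p y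

lemma margY_bool (p : Bool → Y → ℝ) (y : Y) : margY p y = p true y + p false y :=
  Fintype.sum_bool _

lemma margY_nonneg (hp : ∀ x y, 0 ≤ p x y) (y : Y) : 0 ≤ margY p y :=
  Finset.sum_nonneg fun x _ => hp x y

lemma condProbTrue_mem_Icc (hp : ∀ x y, 0 ≤ p x y) (y : Y) :
    condProbTrue p y ∈ Set.Icc (0:ℝ) 1 := by
  rcases (margY_nonneg hp y).eq_or_lt with hm | hm
  · simp [condProbTrue, ← hm]
  · refine ⟨div_nonneg (hp true y) hm.le, (div_le_one hm).2 ?_⟩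
    linarith [margY_bool p y, hp false y]

lemma margY_combine (y1 : Y1) (y2 : Y2) :
    margY (combine p1 p2) (y1, y2) = margY p1 y1 * margY p2 y2 := by
  simp only [margY, combine, Fintype.sum_bool, Bool.xor_true, Bool.xor_false, Bool.not_true,
    Bool.not_false]
  ring

lemma condProbTrue_combine {y1 : Y1} {y2 : Y2} (h1 : margY p1 y1 ≠ 0) (h2 : margY p2 y2 ≠ 0) :
    condProbTrue (combine p1 p2) (y1, y2) =
      bconv (condProbTrue p1 y1) (condProbTrue p2 y2) := by
  rw [margY_bool] at h1 h2
  rw [condProbTrue, margY_combine, condProbTrue, condProbTrue, margY_bool, margY_bool, bconv]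
  field_simp
  simp only [combine, Fintype.sum_bool, Bool.xor_true, Bool.not_true, Bool.not_false]
  ring

end ConditionalProbability

section Hayashi

variable {α : ℝ} {Y Y1 Y2 : Type*} [Fintype Y] [Fintype Y1] [Fintype Y2]
  {p : Bool → Y → ℝ} {p1 : Bool → Y1 → ℝ} {p2 : Bool → Y2 → ℝ}

lemma sum_margY (hp : IsPmf p) : ∑ y, margY p y = 1 := by
  rw [← hp.2, Finset.sum_comm]
  rfl

lemma condH_eq_log_sum (α : ℝ) (p : Bool → Y → ℝ) :
    condH α p = 1 / (1 - α) * Real.log (∑ y, margY p y * kH α (condProbTrue p y)) := by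
  unfold condH
  congr 2
  refine Finset.sum_congr rfl fun y _ => ?_
  rw [Fintype.sum_bool, kH, condProbTrue]
  rcases eq_or_ne (margY p y) 0 with hm | hm
  · simp [hm]
  · have hfalse : p false y / margY p y = 1 - p true y / margY p y := by
      field_simp
      linarith [margY_bool p y]
    rw [hfalse]
    ring

lemma sum_margY_mul_kH_mem_IH (hα₀ : 0 < α) (hα₁ : α ≠ 1) (hp : IsPmf p) :
    ∑ y, margY p y * kH α (condProbTrue p y) ∈ IH α :=
  (convex_uIcc _ _).sum_mem (fun y _ => margY_nonneg hp.1 y) (sum_margY hp)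
    fun y _ => kH_mem_IH hα₀ hα₁ (condProbTrue_mem_Icc hp.1 y)

lemma KH_eq_sum (hα₀ : 0 < α) (hα₁ : α ≠ 1) (hp : IsPmf p) :
    KH α p = ∑ y, margY p y * kH α (condProbTrue p y) := by
  have hpos := pos_of_mem_IH (sum_margY_mul_kH_mem_IH hα₀ hα₁ hp)
  rw [KH, condH_eq_log_sum, ← mul_assoc, mul_one_div_cancel (sub_ne_zero.2 hα₁.symm), one_mul,
    Real.exp_log hpos]

lemma KH_mem_IH (hα₀ : 0 < α) (hα₁ : α ≠ 1) (hp : IsPmf p) : KH α p ∈ IH α :=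
  KH_eq_sum hα₀ hα₁ hp ▸ sum_margY_mul_kH_mem_IH hα₀ hα₁ hp

lemma condH_eq_log_KH (hα₁ : α ≠ 1) (p : Bool → Y → ℝ) :
    condH α p = 1 / (1 - α) * Real.log (KH α p) := by
  rw [KH, Real.log_exp, ← mul_assoc, one_div_mul_cancel (sub_ne_zero.2 hα₁.symm), one_mul]

lemma binHInv_condH (hα₀ : 0 < α) (hα₁ : α ≠ 1) (hp : IsPmf p) :
    binHInv α (condH α p) = kHInv α (KH α p) := by
  have hmem := KH_mem_IH hα₀ hα₁ hp
  have hcondH : condH α p = binH α (kHInv α (KH α p)) := by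
    rw [condH_eq_log_KH hα₁, binH, ← kH, kH_kHInv hα₀ hα₁ hmem]
  rw [hcondH]
  exact (binH_injOn hα₀ hα₁).leftInvOn_invFunOn (kHInv_mem_Icc hα₀ hα₁ hmem)

lemma isPmf_combine (hp1 : IsPmf p1) (hp2 : IsPmf p2) : IsPmf (combine p1 p2) := by
  refine ⟨fun z y => Finset.sum_nonneg fun x _ => mul_nonneg (hp1.1 _ _) (hp2.1 _ _), ?_⟩
  rw [Finset.sum_comm, Fintype.sum_prod_type]
  simp_rw [← margY.eq_def (combine p1 p2), margY_combine, ← Finset.mul_sum, ← Finset.sum_mul,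
    sum_margY hp1, sum_margY hp2, one_mul]

lemma KH_combine (hα₀ : 0 < α) (hα₁ : α ≠ 1) (hp1 : IsPmf p1) (hp2 : IsPmf p2) :
    KH α (combine p1 p2) = ∑ y1, ∑ y2, margY p1 y1 * margY p2 y2 *
      kkH α (kH α (condProbTrue p1 y1)) (kH α (condProbTrue p2 y2)) := by
  rw [KH_eq_sum hα₀ hα₁ (isPmf_combine hp1 hp2), Fintype.sum_prod_type]
  refine Finset.sum_congr rfl fun y1 _ => Finset.sum_congr rfl fun y2 _ => ?_
  rw [margY_combine]
  rcases eq_or_ne (margY p1 y1) 0 with h1 | h1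
  · simp [h1]
  rcases eq_or_ne (margY p2 y2) 0 with h2 | h2
  · simp [h2]
  rw [condProbTrue_combine h1 h2, kkH_kH_kH hα₀ hα₁ (condProbTrue_mem_Icc hp1.1 y1)
    (condProbTrue_mem_Icc hp2.1 y2)]

lemma kkH_KH_le_KH_combine (hα₀ : 0 < α) (hα₁ : α ≠ 1) (hp1 : IsPmf p1) (hp2 : IsPmf p2)
    (h1 : ∀ y ∈ IH α, ConvexOn ℝ (IH α) (fun x => kkH α x y))
    (h2 : ∀ x ∈ IH α, ConvexOn ℝ (IH α) (fun y => kkH α x y)) :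
    kkH α (KH α p1) (KH α p2) ≤ KH α (combine p1 p2) := by
  rw [KH_combine hα₀ hα₁ hp1 hp2, KH_eq_sum hα₀ hα₁ hp1, KH_eq_sum hα₀ hα₁ hp2]
  simpa only [smul_eq_mul] using map_sum_sum_le_of_convexOn h1 h2
    (fun y _ => margY_nonneg hp1.1 y) (sum_margY hp1) (fun y _ => margY_nonneg hp2.1 y)
    (sum_margY hp2) (fun y _ => kH_mem_IH hα₀ hα₁ (condProbTrue_mem_Icc hp1.1 y))
    (fun y _ => kH_mem_IH hα₀ hα₁ (condProbTrue_mem_Icc hp2.1 y))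

lemma KH_combine_le_kkH_KH (hα₀ : 0 < α) (hα₁ : α ≠ 1) (hp1 : IsPmf p1) (hp2 : IsPmf p2)
    (h1 : ∀ y ∈ IH α, ConcaveOn ℝ (IH α) (fun x => kkH α x y))
    (h2 : ∀ x ∈ IH α, ConcaveOn ℝ (IH α) (fun y => kkH α x y)) :
    KH α (combine p1 p2) ≤ kkH α (KH α p1) (KH α p2) := by
  rw [KH_combine hα₀ hα₁ hp1 hp2, KH_eq_sum hα₀ hα₁ hp1, KH_eq_sum hα₀ hα₁ hp2]
  simpa only [smul_eq_mul] using sum_sum_le_map_of_concaveOn h1 h2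
    (fun y _ => margY_nonneg hp1.1 y) (sum_margY hp1) (fun y _ => margY_nonneg hp2.1 y)
    (sum_margY hp2) (fun y _ => kH_mem_IH hα₀ hα₁ (condProbTrue_mem_Icc hp1.1 y))
    (fun y _ => kH_mem_IH hα₀ hα₁ (condProbTrue_mem_Icc hp2.1 y))

lemma binH_bconv_binHInv_condH (hα₀ : 0 < α) (hα₁ : α ≠ 1) (hp1 : IsPmf p1) (hp2 : IsPmf p2) :
    binH α (bconv (binHInv α (condH α p1)) (binHInv α (condH α p2))) =
      1 / (1 - α) * Real.log (kkH α (KH α p1) (KH α p2)) := by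
  rw [binHInv_condH hα₀ hα₁ hp1, binHInv_condH hα₀ hα₁ hp2]
  rfl

end Hayashi

lemma one_div_one_sub_mul_log_le_of_one_lt {α a b : ℝ} (hα : 1 < α) (ha : 0 < a) (hab : a ≤ b) :
    1 / (1 - α) * Real.log b ≤ 1 / (1 - α) * Real.log a :=
  mul_le_mul_of_nonpos_left (Real.log_le_log ha hab) (one_div_nonpos.2 (by linarith))

lemma one_div_one_sub_mul_log_le_of_lt_one {α a b : ℝ} (hα : α < 1) (ha : 0 < a) (hab : a ≤ b) :
    1 / (1 - α) * Real.log a ≤ 1 / (1 - α) * Real.log b :=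
  mul_le_mul_of_nonneg_left (Real.log_le_log ha hab) (one_div_nonneg.2 (by linarith))

/-- BSC-bound for the Hayashi conditional Rényi entropy. -/
theorem stmt_6 (α : ℝ) (hα : 0 < α) (hα1 : α ≠ 1)
    {Y1 Y2 : Type*} [Fintype Y1] [Fintype Y2]
    (p1 : Bool → Y1 → ℝ) (p2 : Bool → Y2 → ℝ)
    (hp1 : IsPmf p1) (hp2 : IsPmf p2) :
    (((∀ y ∈ IH α, ConvexOn ℝ (IH α) (fun x => kkH α x y)) ∧
      (∀ x ∈ IH α, ConvexOn ℝ (IH α) (fun y => kkH α x y))) →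
      (1 < α → condH α (combine p1 p2) ≤
          binH α (bconv (binHInv α (condH α p1)) (binHInv α (condH α p2)))) ∧
      (α < 1 → binH α (bconv (binHInv α (condH α p1)) (binHInv α (condH α p2))) ≤
          condH α (combine p1 p2))) ∧
    (((∀ y ∈ IH α, ConcaveOn ℝ (IH α) (fun x => kkH α x y)) ∧
      (∀ x ∈ IH α, ConcaveOn ℝ (IH α) (fun y => kkH α x y))) →
      (1 < α → binH α (bconv (binHInv α (condH α p1)) (binHInv α (condH α p2))) ≤
          condH α (combine p1 p2)) ∧
      (α < 1 → condH α (combine p1 p2) ≤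
          binH α (bconv (binHInv α (condH α p1)) (binHInv α (condH α p2))))) := by
  rw [binH_bconv_binHInv_condH hα hα1 hp1 hp2, condH_eq_log_KH hα1]
  have hκ : 0 < kkH α (KH α p1) (KH α p2) :=
    pos_of_mem_IH (kkH_mem_IH hα hα1 (KH_mem_IH hα hα1 hp1) (KH_mem_IH hα hα1 hp2))
  have hK : 0 < KH α (combine p1 p2) :=
    pos_of_mem_IH (KH_mem_IH hα hα1 (isPmf_combine hp1 hp2))
  refine ⟨fun ⟨h1, h2⟩ => ?_, fun ⟨h1, h2⟩ => ?_⟩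
  · have hle := kkH_KH_le_KH_combine hα hα1 hp1 hp2 h1 h2
    exact ⟨fun h => one_div_one_sub_mul_log_le_of_one_lt h hκ hle,
      fun h => one_div_one_sub_mul_log_le_of_lt_one h hκ hle⟩
  · have hle := KH_combine_le_kkH_KH hα hα1 hp1 hp2 h1 h2
    exact ⟨fun h => one_div_one_sub_mul_log_le_of_one_lt h hK hle,
      fun h => one_div_one_sub_mul_log_le_of_lt_one h hK hle⟩
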